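/- arXiv:1510.06095 — 2 statements merged into one kernel-verified Lean document; each statement's English description precedes it below -/
import Mathlib

section
/- Let Ψ : [0,∞) → [0,∞) be continuous with Ψ(0) = 0 and Ψ(σ²) ≤ V·σ²/(V+σ²) for all σ², where V > 0. Fix β > 0. Then for N₀ = 0, the state-evolution sequence defined by σ₁² = β·V and σ_{t+1}² = β·Ψ(σ_t²) satisfies: if β < β_max := inf_{σ²>0} σ²/Ψ(σ²), then σ_t² → 0 as t → ∞ (perfect recovery), assuming additionally that Ψ is nondecreasing. -/
/-!
Below the threshold, `β · Ψ(x) < x` for every `x > 0`, so the map `x ↦ β · Ψ(x)` pushes every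
positive point strictly down. The state evolution is therefore a nonnegative nonincreasing
sequence; its limit is a fixed point of the map by continuity, and the only fixed point in
`[0, ∞)` is `0`.
-/

open Filter Topology Set

theorem isFixedPt_of_tendsto_of_continuousWithinAt {α : Type*} [TopologicalSpace α] [T2Space α]
    {f : α → α} {s : Set α} {u : ℕ → α} {a : α} (hrec : ∀ n, u (n + 1) = f (u n))
    (hmem : ∀ n, u n ∈ s) (hu : Tendsto u atTop (𝓝 a)) (hf : ContinuousWithinAt f s a) :
    f a = a := by
  have hfu : Tendsto (fun n => f (u n)) atTop (𝓝 (f a)) :=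
    hf.tendsto.comp (tendsto_nhdsWithin_iff.mpr ⟨hu, Eventually.of_forall hmem⟩)
  have hshift : Tendsto (fun n => u (n + 1)) atTop (𝓝 a) := (tendsto_add_atTop_iff_nat 1).mpr hu
  simp only [hrec] at hshift
  exact tendsto_nhds_unique hfu hshift

theorem tendsto_zero_of_recurrence_lt_self {f : ℝ → ℝ} (hf : ContinuousOn f (Ici 0))
    (hf0 : f 0 = 0) (hlt : ∀ x > 0, f x < x) {u : ℕ → ℝ} (hu : ∀ n, 0 ≤ u n)
    (hrec : ∀ n, u (n + 1) = f (u n)) : Tendsto u atTop (𝓝 0) := by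
  have hle : ∀ x, 0 ≤ x → f x ≤ x := fun x hx => by
    rcases hx.eq_or_lt with rfl | hx
    · exact hf0.le
    · exact (hlt x hx).le
  have hanti : Antitone u := antitone_nat_of_succ_le fun n => hrec n ▸ hle _ (hu n)
  have hbdd : BddBelow (range u) := ⟨0, by rintro _ ⟨n, rfl⟩; exact hu n⟩
  have hlim : Tendsto u atTop (𝓝 (⨅ n, u n)) := tendsto_atTop_ciInf hanti hbdd
  have hinf_nonneg : 0 ≤ ⨅ n, u n := le_ciInf hu
  have hfix : f (⨅ n, u n) = ⨅ n, u n :=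
    isFixedPt_of_tendsto_of_continuousWithinAt hrec hu hlim (hf _ hinf_nonneg)
  have hinf_zero : ⨅ n, u n = 0 := by
    by_contra hne
    exact (hlt _ (hinf_nonneg.lt_of_ne' hne)).ne hfix
  rwa [hinf_zero] at hlim

theorem mul_lt_of_ofReal_lt_ratio {β x y : ℝ} (hx : 0 < x) (hy : 0 ≤ y)
    (h : ENNReal.ofReal β < if y = 0 then ⊤ else ENNReal.ofReal (x / y)) : β * y < x := by
  rcases hy.eq_or_lt with rfl | hy
  · simpa using hx
  · rw [if_neg hy.ne', ENNReal.ofReal_lt_ofReal_iff (div_pos hx hy), lt_div_iff₀ hy] at h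
    exact h

theorem noiseless_state_evolution_perfect_recovery_general
    (Ψ : ℝ → ℝ) (hcont : ContinuousOn Ψ (Set.Ici 0))
    (hnonneg : ∀ x ∈ Set.Ici (0 : ℝ), 0 ≤ Ψ x)
    (hΨ0 : Ψ 0 = 0)
    (V : ℝ) (hV : 0 < V)
    (β : ℝ) (hβ : 0 < β)
    (βmax : ENNReal)
    (hβmax : βmax = ⨅ x ∈ Set.Ioi (0 : ℝ),
      (if Ψ x = 0 then ⊤ else ENNReal.ofReal (x / Ψ x)))
    (hβlt : ENNReal.ofReal β < βmax)
    (s : ℕ → ℝ) (hs1 : s 1 = β * V)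
    (hrec : ∀ t ≥ 1, s (t + 1) = β * Ψ (s t)) :
    Tendsto (fun t => s t) atTop (nhds 0) := by
  have hcontract : ∀ x > 0, β * Ψ x < x := fun x hx =>
    mul_lt_of_ofReal_lt_ratio hx (hnonneg x hx.le)
      (hβlt.trans_le (hβmax ▸ biInf_le (fun x => if Ψ x = 0 then ⊤ else _) hx))
  have hshift : ∀ n, s (n + 1 + 1) = β * Ψ (s (n + 1)) := fun n => hrec (n + 1) (by omega)
  have hs_nonneg : ∀ n, 0 ≤ s (n + 1) := by
    intro n
    induction n with
    | zero => rw [hs1]; positivity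
    | succ n ih => rw [hshift]; exact mul_nonneg hβ.le (hnonneg _ ih)
  refine (tendsto_add_atTop_iff_nat 1).mp ?_
  exact tendsto_zero_of_recurrence_lt_self (hcont.const_smul β) (by simp [hΨ0]) hcontract
    hs_nonneg hshift

/-- Noiseless state evolution below the exact recovery threshold converges to zero
effective noise variance (perfect recovery). -/
theorem noiseless_state_evolution_perfect_recovery
    (Ψ : ℝ → ℝ) (hcont : ContinuousOn Ψ (Set.Ici 0))
    (hnonneg : ∀ x ∈ Set.Ici (0 : ℝ), 0 ≤ Ψ x)
    (hΨ0 : Ψ 0 = 0)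
    (V : ℝ) (hV : 0 < V)
    (hbound : ∀ x ∈ Set.Ici (0 : ℝ), Ψ x ≤ V * x / (V + x))
    (hmono : ∀ x y, 0 ≤ x → x ≤ y → Ψ x ≤ Ψ y)
    (β : ℝ) (hβ : 0 < β)
    (βmax : ENNReal)
    (hβmax : βmax = ⨅ x ∈ Set.Ioi (0 : ℝ),
      (if Ψ x = 0 then ⊤ else ENNReal.ofReal (x / Ψ x)))
    (hβlt : ENNReal.ofReal β < βmax)
    (s : ℕ → ℝ) (hs1 : s 1 = β * V)
    (hrec : ∀ t ≥ 1, s (t + 1) = β * Ψ (s t)) :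
    Tendsto (fun t => s t) atTop (nhds 0) :=
  noiseless_state_evolution_perfect_recovery_general Ψ hcont hnonneg hΨ0 V hV β hβ βmax hβmax hβlt s
    hs1 hrec
end

section
/- Let Ψ : [0,∞) → [0,∞) be continuous, nondecreasing, with Ψ(0)=0 and Ψ(σ²) < σ² for σ² > 0. Suppose β ≥ β_max := inf_{σ²>0} σ²/Ψ(σ²) and the infimum is attained at some σ₀² > 0. Then for N₀ = 0 the fixed-point equation σ² = βΨ(σ²) has a solution σ² ≥ σ₀² > 0 when β > β_max; in particular exact recovery (unique fixed point at zero) fails. -/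
/-! Since β > σ₀/Ψ(σ₀), the map x ↦ βΨ(x) lies above the diagonal at σ₀; being bounded, it lies
below the diagonal far out, and the intermediate value theorem yields a fixed point beyond σ₀. -/

open Set Function

theorem exists_isFixedPt_ge_of_le_of_bounded {g : ℝ → ℝ} {a V : ℝ}
    (hg : ContinuousOn g (Ici a)) (ha : a ≤ g a) (hbdd : ∀ x, a ≤ x → g x ≤ V) :
    ∃ x, a ≤ x ∧ IsFixedPt g x := by
  set b := max a V
  have hab : a ≤ b := le_max_left a V
  have hb : g b ≤ b := (hbdd b hab).trans (le_max_right a V)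
  have hcont : ContinuousOn (fun x => g x - x) (Icc a b) :=
    (hg.mono Icc_subset_Ici_self).sub continuousOn_id
  obtain ⟨x, hx, hgx⟩ := intermediate_value_Icc' hab hcont
    (show (0 : ℝ) ∈ Icc (g b - b) (g a - a) from ⟨by linarith, by linarith⟩)
  exact ⟨x, hx.1, sub_eq_zero.mp hgx⟩

theorem lt_mul_of_ite_ofReal_div_lt {x y β : ℝ} (hy : 0 ≤ y)
    (h : (if y = 0 then ⊤ else ENNReal.ofReal (x / y)) < ENNReal.ofReal β) : x < β * y := by
  have hy0 : y ≠ 0 := by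
    rintro rfl
    simp at h
  rw [if_neg hy0, ENNReal.ofReal_lt_ofReal_iff'] at h
  exact (div_lt_iff₀ (hy.lt_of_ne' hy0)).mp h.1

theorem positive_fixed_point_above_ERT_general
    (Ψ : ℝ → ℝ) (hcont : ContinuousOn Ψ (Set.Ici 0))
    (hnonneg : ∀ x, 0 ≤ x → 0 ≤ Ψ x)
    (V : ℝ) (hV : ∀ x, 0 ≤ x → Ψ x ≤ V)
    (βmax : ENNReal)
    (σ0 : ℝ) (hσ0 : 0 < σ0)
    (hattained : (if Ψ σ0 = 0 then ⊤ else ENNReal.ofReal (σ0 / Ψ σ0)) = βmax)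
    (β : ℝ) (hβ : βmax < ENNReal.ofReal β) :
    ∃ x : ℝ, σ0 ≤ x ∧ x = β * Ψ x := by
  have hβpos : 0 < β := ENNReal.ofReal_pos.mp (hβ.trans_le' bot_le)
  have hstart : σ0 < β * Ψ σ0 :=
    lt_mul_of_ite_ofReal_div_lt (hnonneg σ0 hσ0.le) (hattained ▸ hβ)
  have hΨcont : ContinuousOn (fun x => β * Ψ x) (Ici σ0) :=
    continuousOn_const.mul (hcont.mono (Ici_subset_Ici.mpr hσ0.le))
  obtain ⟨x, hσ0x, hx⟩ := exists_isFixedPt_ge_of_le_of_bounded hΨcont hstart.le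
    fun x hx => mul_le_mul_of_nonneg_left (hV x (hσ0.le.trans hx)) hβpos.le
  exact ⟨x, hσ0x, hx.symm⟩

/-- If β exceeds the exact recovery threshold β_max, attained at some σ₀² > 0, then
the noiseless fixed-point equation σ² = βΨ(σ²) has a solution σ² ≥ σ₀² > 0; exact
recovery fails. -/
theorem positive_fixed_point_above_ERT
    (Ψ : ℝ → ℝ) (hcont : ContinuousOn Ψ (Set.Ici 0))
    (hmono : ∀ x y, 0 ≤ x → x ≤ y → Ψ x ≤ Ψ y)
    (hnonneg : ∀ x, 0 ≤ x → 0 ≤ Ψ x)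
    (hΨ0 : Ψ 0 = 0) (hlt : ∀ x > 0, Ψ x < x)
    (V : ℝ) (hV : ∀ x, 0 ≤ x → Ψ x ≤ V)
    (βmax : ENNReal)
    (hβmax : βmax = ⨅ x ∈ Set.Ioi (0 : ℝ),
      (if Ψ x = 0 then ⊤ else ENNReal.ofReal (x / Ψ x)))
    (σ0 : ℝ) (hσ0 : 0 < σ0)
    (hattained : (if Ψ σ0 = 0 then ⊤ else ENNReal.ofReal (σ0 / Ψ σ0)) = βmax)
    (β : ℝ) (hβ : βmax < ENNReal.ofReal β) :
    ∃ x : ℝ, σ0 ≤ x ∧ x = β * Ψ x :=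
  positive_fixed_point_above_ERT_general Ψ hcont hnonneg V hV βmax σ0 hσ0 hattained β hβ
end
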